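/- arXiv:1512.08092 — 2 statements merged into one kernel-verified Lean document; each statement's English description precedes it below -/
import Mathlib

section
/- Let μ ∈ Δ⁺_l be a long positive root and let w ∈ W satisfy w(θ) = μ and have minimal length among all elements of W taking θ to μ. If β ∈ Π and (β, μ) = 0, then w⁻¹(β) ∈ Π and (w⁻¹(β), θ) = 0. -/
/-!
Put `γ = w⁻¹ β`, so that `(γ, θ) = (β, μ) = 0`. Minimality of `w` and the exchange condition
show that `w` sends every positive root orthogonal to `θ` to a positive root. Applied to `-γ`
this forces `γ > 0`. If `γ` were not simple, then `γ = δ + α` with `δ` a positive root and `α`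
simple; since `θ` is dominant, both are orthogonal to `θ`, so `β = w δ + w α` would be a sum of
two positive roots.
-/

open scoped InnerProductSpace

/-- An irreducible reduced crystallographic root system, spanning a finite-dimensional
real inner product space, together with a fixed base (set of simple roots) and the
coefficient function expressing each root in the base. -/
structure RootSystemData (V : Type) [NormedAddCommGroup V] [InnerProductSpace ℝ V]
    [FiniteDimensional ℝ V] where
  roots : Set V
  finite : roots.Finite
  nonzero : ∀ γ ∈ roots, γ ≠ 0
  spans : Submodule.span ℝ roots = ⊤
  reflClosed : ∀ α ∈ roots, ∀ β ∈ roots, β - (2 * ⟪β, α⟫_ℝ / ⟪α, α⟫_ℝ) • α ∈ roots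
  crystal : ∀ α ∈ roots, ∀ β ∈ roots, ∃ k : ℤ, 2 * ⟪β, α⟫_ℝ / ⟪α, α⟫_ℝ = (k : ℝ)
  reduced : ∀ α ∈ roots, ∀ t : ℝ, t • α ∈ roots → t = 1 ∨ t = -1
  irred : ∀ A B : Set V, roots = A ∪ B → (∀ a ∈ A, ∀ b ∈ B, ⟪a, b⟫_ℝ = 0) →
    A = ∅ ∨ B = ∅
  simples : Finset V
  simples_sub : ↑simples ⊆ roots
  simples_indep : LinearIndependent ℝ (Subtype.val : {x : V // x ∈ simples} → V)
  coeff : V → V → ℤ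
  coeff_spec : ∀ γ ∈ roots, γ = ∑ α ∈ simples, coeff γ α • α
  coeff_sign : ∀ γ ∈ roots, (∀ α ∈ simples, 0 ≤ coeff γ α) ∨ (∀ α ∈ simples, coeff γ α ≤ 0)

namespace RootSystemData

variable {V : Type} [NormedAddCommGroup V] [InnerProductSpace ℝ V] [FiniteDimensional ℝ V]
variable (R : RootSystemData V)

/-- The set of positive roots `Δ⁺` (w.r.t. the base `simples`). -/
def posRoots : Set V := {γ | γ ∈ R.roots ∧ ∀ α ∈ R.simples, 0 ≤ R.coeff γ α}

/-- The partial order `μ ≼ ν`: `ν - μ` is a nonnegative integral combination of simple roots. -/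
def rle (μ ν : V) : Prop := ∃ c : V → ℕ, ν - μ = ∑ α ∈ R.simples, (c α : ℤ) • α

/-- `θ` is the highest root. -/
def IsHighest (θ : V) : Prop := θ ∈ R.posRoots ∧ ∀ γ ∈ R.roots, R.rle γ θ

/-- `γ` is a long root: a root of maximal length. -/
def IsLong (γ : V) : Prop := γ ∈ R.roots ∧ ∀ γ' ∈ R.roots, ‖γ'‖ ≤ ‖γ‖

/-- `I` is an upper ideal of `(Δ⁺, ≼)`. -/
def IsUpperIdeal (I : Set V) : Prop :=
  I ⊆ R.posRoots ∧ ∀ ν ∈ I, ∀ γ ∈ R.posRoots, R.rle ν γ → γ ∈ I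

/-- `I` is an abelian upper ideal of `(Δ⁺, ≼)`. -/
def IsAbelianIdeal (I : Set V) : Prop :=
  R.IsUpperIdeal I ∧ ∀ γ₁ ∈ I, ∀ γ₂ ∈ I, γ₁ + γ₂ ∉ R.roots

/-- The set of minimal elements of `M ⊆ Δ⁺` w.r.t. `≼`. -/
def minSet (M : Set V) : Set V := {γ | γ ∈ M ∧ ∀ ν ∈ M, R.rle ν γ → ν = γ}

/-- The set of maximal elements of `M ⊆ Δ⁺` w.r.t. `≼`. -/
def maxSet (M : Set V) : Set V := {γ | γ ∈ M ∧ ∀ ν ∈ M, R.rle γ ν → ν = γ}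

/-- `S(I) = {α ∈ Π : ∃ γ ∈ min(I), γ - α ∈ Δ⁺ ∪ {0}}`; the complement `Π ∖ S(I)` is the
set of simple roots of the standard Levi subalgebra of the normaliser of the ideal `I`. -/
def normS (I : Set V) : Set V :=
  {α | α ∈ R.simples ∧ ∃ γ ∈ R.minSet I, (γ - α ∈ R.posRoots ∨ γ = α)}

/-- `H = {γ ∈ Δ⁺ : (γ, θ) ≠ 0}`. -/
def Hset (θ : V) : Set V := {γ | γ ∈ R.posRoots ∧ ⟪γ, θ⟫_ℝ ≠ 0}

/-- `deg_S(γ) = Σ_{α ∈ S} [γ:α]`. -/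
def degS (S : Finset V) (γ : V) : ℤ := ∑ α ∈ S, R.coeff γ α

/-- `I_S = {γ ∈ Δ⁺ : deg_S(γ) ≥ ⌊d(S)/2⌋ + 1}`, where `d(S) = deg_S(θ)`: the abelian ideal
`g(≥ ⌊hot(p)/2⌋ + 1)` associated with the standard parabolic subalgebra `p(S)`. -/
def idealS (S : Finset V) (θ : V) : Set V :=
  {γ | γ ∈ R.posRoots ∧ R.degS S θ / 2 + 1 ≤ R.degS S γ}

/-- The highest root `θ` is fundamental with `α_θ` the unique simple root not
orthogonal to `θ`, and `(θ, α_θ∨) = 1`. -/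
def IsFundamental (θ αθ : V) : Prop :=
  αθ ∈ R.simples ∧ ⟪θ, αθ⟫_ℝ ≠ 0 ∧ (∀ β ∈ R.simples, ⟪θ, β⟫_ℝ ≠ 0 → β = αθ) ∧
    2 * ⟪θ, αθ⟫_ℝ / ⟪αθ, αθ⟫_ℝ = 1

end RootSystemData

/-- The reflection `s_α`. -/
noncomputable def rsRefl {V : Type} [NormedAddCommGroup V] [InnerProductSpace ℝ V] (α x : V) : V :=
  x - (2 * ⟪x, α⟫_ℝ / ⟪α, α⟫_ℝ) • α

/-- The element of the Weyl group given by the word `l = [α₁, …, α_m]`,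
namely `s_{α₁} ∘ ⋯ ∘ s_{α_m}`; its inverse is `wordMap l.reverse`. -/
noncomputable def wordMap {V : Type} [NormedAddCommGroup V] [InnerProductSpace ℝ V] (l : List V) : V → V :=
  l.foldr (fun α f => rsRefl α ∘ f) id

section WeylWords

variable {V : Type} [NormedAddCommGroup V] [InnerProductSpace ℝ V]

lemma rsRefl_eq_reflection (α : V) : rsRefl α = (ℝ ∙ α)ᗮ.reflection := by
  funext x
  rw [Submodule.reflection_orthogonal_apply, Submodule.reflection_singleton_apply, rsRefl,
    real_inner_self_eq_norm_sq, real_inner_comm]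
  module

lemma rsRefl_rsRefl (α x : V) : rsRefl α (rsRefl α x) = x := by
  rw [rsRefl_eq_reflection, Submodule.reflection_reflection]

lemma rsRefl_of_inner_eq_zero {α x : V} (h : ⟪x, α⟫_ℝ = 0) : rsRefl α x = x := by
  simp [rsRefl, h]

noncomputable def wordIsometry (l : List V) : V ≃ₗᵢ[ℝ] V :=
  l.foldr (fun α e => e.trans (ℝ ∙ α)ᗮ.reflection) (LinearIsometryEquiv.refl ℝ V)

lemma coe_wordIsometry (l : List V) : ⇑(wordIsometry l) = wordMap l := by
  induction l with
  | nil => rfl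
  | cons α t ih =>
    change ⇑((wordIsometry t).trans (ℝ ∙ α)ᗮ.reflection) = rsRefl α ∘ wordMap t
    rw [LinearIsometryEquiv.coe_trans, ih, rsRefl_eq_reflection]

lemma wordMap_inner (l : List V) (x y : V) : ⟪wordMap l x, wordMap l y⟫_ℝ = ⟪x, y⟫_ℝ := by
  rw [← coe_wordIsometry, LinearIsometryEquiv.inner_map_map]

lemma wordMap_add (l : List V) (x y : V) : wordMap l (x + y) = wordMap l x + wordMap l y := by
  rw [← coe_wordIsometry, map_add]

lemma wordMap_neg (l : List V) (x : V) : wordMap l (-x) = -wordMap l x := by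
  rw [← coe_wordIsometry, map_neg]

lemma wordMap_rsRefl (l : List V) (δ x : V) :
    wordMap l (rsRefl δ x) = rsRefl (wordMap l δ) (wordMap l x) := by
  simp only [rsRefl, ← coe_wordIsometry, map_sub, map_smul, LinearIsometryEquiv.inner_map_map]

lemma wordMap_append (l₁ l₂ : List V) : wordMap (l₁ ++ l₂) = wordMap l₁ ∘ wordMap l₂ := by
  induction l₁ with
  | nil => rfl
  | cons α t ih =>
    change rsRefl α ∘ wordMap (t ++ l₂) = (rsRefl α ∘ wordMap t) ∘ wordMap l₂
    rw [ih]
    rfl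

lemma wordMap_apply_reverse (l : List V) (x : V) : wordMap l (wordMap l.reverse x) = x := by
  induction l generalizing x with
  | nil => rfl
  | cons α t ih =>
    rw [List.reverse_cons, wordMap_append]
    change rsRefl α (wordMap t (wordMap t.reverse (rsRefl α x))) = x
    rw [ih, rsRefl_rsRefl]

end WeylWords

namespace RootSystemData

variable {V : Type} [NormedAddCommGroup V] [InnerProductSpace ℝ V] [FiniteDimensional ℝ V]
variable (R : RootSystemData V)

lemma top_le_span_simples : ⊤ ≤ Submodule.span ℝ (Set.range ((↑) : R.simples → V)) := by
  rw [← R.spans, Subtype.range_coe_subtype, Submodule.span_le]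
  intro γ hγ
  rw [R.coeff_spec γ hγ]
  exact Submodule.sum_mem _ fun α hα => Submodule.smul_of_tower_mem _ _ (Submodule.subset_span hα)

noncomputable def simpleBasis : Module.Basis R.simples ℝ V :=
  Module.Basis.mk R.simples_indep R.top_le_span_simples

lemma simpleBasis_repr_sum (f : V → ℝ) {α : V} (hα : α ∈ R.simples) :
    R.simpleBasis.repr (∑ δ ∈ R.simples, f δ • δ) ⟨α, hα⟩ = f α := by
  have h : ∑ δ ∈ R.simples, f δ • δ = ∑ δ : R.simples, f δ • R.simpleBasis δ := by
    simp only [simpleBasis, Module.Basis.mk_apply]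
    exact (Finset.sum_coe_sort R.simples fun δ => f δ • δ).symm
  rw [h, Module.Basis.repr_sum_self]

lemma simpleBasis_repr_simple {α : V} (hα : α ∈ R.simples) :
    R.simpleBasis.repr α = Finsupp.single ⟨α, hα⟩ 1 := by
  simpa [simpleBasis] using R.simpleBasis.repr_self ⟨α, hα⟩

lemma coeff_eq_repr {γ α : V} (hγ : γ ∈ R.roots) (hα : α ∈ R.simples) :
    (R.coeff γ α : ℝ) = R.simpleBasis.repr γ ⟨α, hα⟩ := by
  conv_rhs => rw [R.coeff_spec γ hγ]
  simp_rw [← Int.cast_smul_eq_zsmul ℝ]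
  rw [R.simpleBasis_repr_sum _ hα]

lemma repr_le_of_rle {μ ν α : V} (h : R.rle μ ν) (hα : α ∈ R.simples) :
    R.simpleBasis.repr μ ⟨α, hα⟩ ≤ R.simpleBasis.repr ν ⟨α, hα⟩ := by
  obtain ⟨c, hc⟩ := h
  simp_rw [← Int.cast_smul_eq_zsmul ℝ, Int.cast_natCast] at hc
  have := R.simpleBasis_repr_sum (fun δ => (c δ : ℝ)) hα
  rw [← hc, map_sub, Finsupp.sub_apply] at this
  linarith [(c α).cast_nonneg (α := ℝ)]

lemma neg_mem_roots {γ : V} (hγ : γ ∈ R.roots) : -γ ∈ R.roots := by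
  have hγ0 : ⟪γ, γ⟫_ℝ ≠ 0 := inner_self_ne_zero.mpr (R.nonzero γ hγ)
  have h := R.reflClosed γ hγ γ hγ
  rwa [mul_div_assoc, div_self hγ0, mul_one, two_smul, sub_add_cancel_left] at h

lemma coeff_neg {γ α : V} (hγ : γ ∈ R.roots) (hα : α ∈ R.simples) :
    R.coeff (-γ) α = -R.coeff γ α := by
  have h := R.coeff_eq_repr (R.neg_mem_roots hγ) hα
  rw [map_neg, Finsupp.neg_apply, ← R.coeff_eq_repr hγ hα] at h
  exact_mod_cast h

lemma mem_posRoots_or_neg_mem {γ : V} (hγ : γ ∈ R.roots) :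
    γ ∈ R.posRoots ∨ -γ ∈ R.posRoots := by
  refine (R.coeff_sign γ hγ).imp (fun h => ⟨hγ, h⟩) fun h => ⟨R.neg_mem_roots hγ, fun α hα => ?_⟩
  rw [R.coeff_neg hγ hα]
  exact neg_nonneg.mpr (h α hα)

lemma neg_notMem_posRoots {γ : V} (hγ : γ ∈ R.posRoots) : -γ ∉ R.posRoots := by
  intro hneg
  refine R.nonzero γ hγ.1 ?_
  rw [R.coeff_spec γ hγ.1]
  refine Finset.sum_eq_zero fun α hα => ?_
  have := hneg.2 α hα
  rw [R.coeff_neg hγ.1 hα] at this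
  rw [le_antisymm (neg_nonneg.mp this) (hγ.2 α hα), zero_smul]

lemma simple_mem_posRoots {α : V} (hα : α ∈ R.simples) : α ∈ R.posRoots := by
  refine ⟨R.simples_sub hα, fun β hβ => ?_⟩
  have h := R.coeff_eq_repr (R.simples_sub hα) hβ
  rw [R.simpleBasis_repr_simple hα] at h
  have : (0 : ℝ) ≤ R.coeff α β := h ▸ Finsupp.single_nonneg.mpr zero_le_one _
  exact_mod_cast this

end RootSystemData

namespace RootSystemData

variable {V : Type} [NormedAddCommGroup V] [InnerProductSpace ℝ V] [FiniteDimensional ℝ V]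
variable (R : RootSystemData V)

lemma exists_ne_coeff_pos {γ α : V} (hγ : γ ∈ R.posRoots) (hα : α ∈ R.simples) (hne : γ ≠ α) :
    ∃ β ∈ R.simples, β ≠ α ∧ 0 < R.coeff γ β := by
  by_contra! h
  have hγα : γ = (R.coeff γ α : ℝ) • α := by
    conv_lhs => rw [R.coeff_spec γ hγ.1]
    rw [Finset.sum_eq_single_of_mem α hα fun β hβ hβα => ?_, Int.cast_smul_eq_zsmul]
    rw [le_antisymm (h β hβ hβα) (hγ.2 β hβ), zero_smul]
  rcases R.reduced α (R.simples_sub hα) _ (hγα ▸ hγ.1) with h1 | h1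
  · exact hne (by rw [hγα, h1, one_smul])
  · have : R.coeff γ α = -1 := by exact_mod_cast h1
    linarith [hγ.2 α hα]

/-- The coefficients of `ν` other than that of `α` are unchanged, and one of them is positive. -/
lemma sub_smul_mem_posRoots {ν α : V} (hν : ν ∈ R.posRoots) (hα : α ∈ R.simples) (hne : ν ≠ α)
    (c : ℝ) (hroot : ν - c • α ∈ R.roots) : ν - c • α ∈ R.posRoots := by
  obtain ⟨β, hβ, hβα, hpos⟩ := R.exists_ne_coeff_pos hν hα hne
  have hcoeff : R.coeff (ν - c • α) β = R.coeff ν β := by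
    have h := R.coeff_eq_repr hroot hβ
    rw [map_sub, map_smul, R.simpleBasis_repr_simple hα, Finsupp.sub_apply, Finsupp.smul_apply,
      Finsupp.single_eq_of_ne (Subtype.coe_ne_coe.mp hβα), smul_zero, sub_zero,
      ← R.coeff_eq_repr hν.1 hβ] at h
    exact_mod_cast h
  refine (R.coeff_sign _ hroot).elim (fun h => ⟨hroot, h⟩) fun h => ?_
  linarith [h β hβ]

lemma rsRefl_mem_posRoots {α ν : V} (hα : α ∈ R.simples) (hν : ν ∈ R.posRoots) (hne : ν ≠ α) :
    rsRefl α ν ∈ R.posRoots :=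
  R.sub_smul_mem_posRoots hν hα hne _ (R.reflClosed α (R.simples_sub hα) ν hν.1)

lemma wordMap_mem_roots {l : List V} (hl : ∀ α ∈ l, α ∈ R.simples) {γ : V}
    (hγ : γ ∈ R.roots) : wordMap l γ ∈ R.roots := by
  induction l with
  | nil => exact hγ
  | cons α t ih =>
    exact R.reflClosed α (R.simples_sub (hl α List.mem_cons_self)) _
      (ih fun β hβ => hl β (List.mem_cons_of_mem α hβ))

/-- The exchange condition. -/
theorem exists_word_eq_comp_rsRefl {l : List V} (hl : ∀ α ∈ l, α ∈ R.simples) {δ : V}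
    (hδ : δ ∈ R.posRoots) (hneg : -wordMap l δ ∈ R.posRoots) :
    ∃ l' : List V, (∀ α ∈ l', α ∈ R.simples) ∧ l'.length + 1 = l.length ∧
      wordMap l' = wordMap l ∘ rsRefl δ := by
  induction l with
  | nil => exact absurd hneg (R.neg_notMem_posRoots hδ)
  | cons α t ih =>
    have hα : α ∈ R.simples := hl α List.mem_cons_self
    have ht : ∀ β ∈ t, β ∈ R.simples := fun β hβ => hl β (List.mem_cons_of_mem α hβ)
    rcases R.mem_posRoots_or_neg_mem (R.wordMap_mem_roots ht hδ.1) with hpos | hneg'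
    · have htδ : wordMap t δ = α := by
        by_contra hne
        exact R.neg_notMem_posRoots (R.rsRefl_mem_posRoots hα hpos hne) hneg
      refine ⟨t, ht, rfl, funext fun x => ?_⟩
      change wordMap t x = rsRefl α (wordMap t (rsRefl δ x))
      rw [wordMap_rsRefl, htδ, rsRefl_rsRefl]
    · obtain ⟨t', ht', hlen, heq⟩ := ih ht hneg'
      refine ⟨α :: t', ?_, by simp [hlen], ?_⟩
      · rintro β (_ | ⟨_, hβ⟩)
        exacts [hα, ht' β hβ]
      · change rsRefl α ∘ wordMap t' = rsRefl α ∘ (wordMap t ∘ rsRefl δ)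
        rw [heq]

/-- Otherwise the exchange condition gives a shorter word for `w s_δ`, which still takes `x`
to `w x`. -/
lemma wordMap_mem_posRoots_of_minimal {l : List V} (hl : ∀ α ∈ l, α ∈ R.simples) {x : V}
    (hmin : ∀ l' : List V, (∀ α ∈ l', α ∈ R.simples) → wordMap l' x = wordMap l x →
      l.length ≤ l'.length)
    {δ : V} (hδ : δ ∈ R.posRoots) (hδx : ⟪δ, x⟫_ℝ = 0) : wordMap l δ ∈ R.posRoots := by
  refine (R.mem_posRoots_or_neg_mem (R.wordMap_mem_roots hl hδ.1)).resolve_right fun hneg => ?_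
  obtain ⟨l', hl', hlen, heq⟩ := R.exists_word_eq_comp_rsRefl hl hδ hneg
  have := hmin l' hl' (by rw [heq, Function.comp_apply,
    rsRefl_of_inner_eq_zero (by rwa [real_inner_comm])])
  omega

end RootSystemData

namespace RootSystemData

variable {V : Type} [NormedAddCommGroup V] [InnerProductSpace ℝ V] [FiniteDimensional ℝ V]
variable (R : RootSystemData V)

/-- Equality in Cauchy–Schwarz makes two roots proportional, hence equal up to sign. -/
lemma eq_or_eq_neg_of_inner_mul_inner_self_le {x y : V} (hx : x ∈ R.roots) (hy : y ∈ R.roots)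
    (h : ⟪x, x⟫_ℝ * ⟪y, y⟫_ℝ ≤ ⟪x, y⟫_ℝ * ⟪x, y⟫_ℝ) : y = x ∨ y = -x := by
  have hCS : ‖⟪x, y⟫_ℝ‖ = ‖x‖ * ‖y‖ := by
    refine le_antisymm (norm_inner_le_norm x y) ?_
    rw [Real.norm_eq_abs, ← sq_le_sq₀ (by positivity) (abs_nonneg _), sq_abs, mul_pow,
      ← real_inner_self_eq_norm_sq, ← real_inner_self_eq_norm_sq, sq]
    exact h
  obtain ⟨r, -, rfl⟩ := (norm_inner_eq_norm_iff (R.nonzero x hx) (R.nonzero y hy)).mp hCS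
  rcases R.reduced x hx r hy with rfl | rfl
  · exact Or.inl (one_smul ℝ x)
  · exact Or.inr (neg_one_smul ℝ x)

/-- If `(x, y) < 0`, one of the Cartan integers `⟨x, y∨⟩, ⟨y, x∨⟩` is `-1` (both `≤ -2` would
violate Cauchy–Schwarz), and the corresponding reflection sends one root to `x + y`. -/
lemma add_mem_roots_of_inner_neg {x y : V} (hx : x ∈ R.roots) (hy : y ∈ R.roots)
    (hxy : ⟪x, y⟫_ℝ < 0) (hne : y ≠ -x) : x + y ∈ R.roots := by
  have hxx : 0 < ⟪x, x⟫_ℝ := real_inner_self_pos.mpr (R.nonzero x hx)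
  have hyy : 0 < ⟪y, y⟫_ℝ := real_inner_self_pos.mpr (R.nonzero y hy)
  obtain ⟨k₁, hk₁⟩ := R.crystal y hy x hx
  obtain ⟨k₂, hk₂⟩ := R.crystal x hx y hy
  rw [real_inner_comm] at hk₂
  by_cases h₁ : k₁ = -1
  · have h := R.reflClosed y hy x hx
    rwa [hk₁, h₁, Int.cast_neg, Int.cast_one, neg_one_smul, sub_neg_eq_add] at h
  by_cases h₂ : k₂ = -1
  · have h := R.reflClosed x hx y hy
    rwa [real_inner_comm x y, hk₂, h₂, Int.cast_neg, Int.cast_one, neg_one_smul, sub_neg_eq_add,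
      add_comm] at h
  have hk₁' : (k₁ : ℝ) ≤ -2 := by
    have : (k₁ : ℝ) < 0 := hk₁ ▸ div_neg_of_neg_of_pos (by linarith) hyy
    have : k₁ < 0 := by exact_mod_cast this
    exact_mod_cast (show k₁ ≤ -2 by omega)
  have hk₂' : (k₂ : ℝ) ≤ -2 := by
    have : (k₂ : ℝ) < 0 := hk₂ ▸ div_neg_of_neg_of_pos (by linarith) hxx
    have : k₂ < 0 := by exact_mod_cast this
    exact_mod_cast (show k₂ ≤ -2 by omega)
  rw [div_eq_iff hyy.ne'] at hk₁
  rw [div_eq_iff hxx.ne'] at hk₂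
  have hCS : ⟪x, x⟫_ℝ * ⟪y, y⟫_ℝ ≤ ⟪x, y⟫_ℝ * ⟪x, y⟫_ℝ := by
    nlinarith [mul_pos hxx hyy, mul_le_mul_of_nonpos_left hk₂' (by linarith : (k₁ : ℝ) ≤ 0)]
  rcases R.eq_or_eq_neg_of_inner_mul_inner_self_le hx hy hCS with rfl | rfl
  · linarith
  · exact absurd rfl hne

lemma inner_eq_sum_coeff {γ : V} (hγ : γ ∈ R.roots) (v : V) :
    ⟪γ, v⟫_ℝ = ∑ α ∈ R.simples, (R.coeff γ α : ℝ) * ⟪α, v⟫_ℝ := by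
  conv_lhs => rw [R.coeff_spec γ hγ]
  simp_rw [sum_inner, ← Int.cast_smul_eq_zsmul ℝ, real_inner_smul_left]

lemma exists_sub_simple_mem_posRoots {γ : V} (hγ : γ ∈ R.posRoots) (hns : γ ∉ R.simples) :
    ∃ α ∈ R.simples, γ - α ∈ R.posRoots := by
  obtain ⟨α, hα, hγα⟩ : ∃ α ∈ R.simples, 0 < ⟪γ, α⟫_ℝ := by
    by_contra! h
    have hγγ : ⟪γ, γ⟫_ℝ ≤ 0 := by
      rw [R.inner_eq_sum_coeff hγ.1]
      refine Finset.sum_nonpos fun α hα => mul_nonpos_of_nonneg_of_nonpos ?_ ?_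
      · exact_mod_cast hγ.2 α hα
      · rw [real_inner_comm]; exact h α hα
    exact (real_inner_self_pos.mpr (R.nonzero γ hγ.1)).not_ge hγγ
  have hne : γ ≠ α := fun h => hns (h ▸ hα)
  have hroot : γ - α ∈ R.roots := by
    rw [sub_eq_add_neg]
    refine R.add_mem_roots_of_inner_neg hγ.1 (R.neg_mem_roots (R.simples_sub hα)) ?_ ?_
    · rwa [inner_neg_right, neg_lt_zero]
    · exact fun h => hne (neg_inj.mp h).symm
  exact ⟨α, hα, by simpa using R.sub_smul_mem_posRoots hγ hα hne 1 (by simpa using hroot)⟩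

lemma inner_simple_nonneg_of_isHighest {θ α : V} (hθ : R.IsHighest θ) (hα : α ∈ R.simples) :
    0 ≤ ⟪α, θ⟫_ℝ := by
  by_contra! hneg
  have hne : α ≠ -θ := fun h =>
    R.neg_notMem_posRoots hθ.1 (h ▸ R.simple_mem_posRoots hα)
  have hroot := R.add_mem_roots_of_inner_neg hθ.1.1 (R.simples_sub hα)
    (by rwa [real_inner_comm]) hne
  have h := R.repr_le_of_rle (hθ.2 _ hroot) hα
  rw [map_add, Finsupp.add_apply, R.simpleBasis_repr_simple hα, Finsupp.single_eq_same] at h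
  linarith

lemma inner_nonneg_of_isHighest {θ γ : V} (hθ : R.IsHighest θ) (hγ : γ ∈ R.posRoots) :
    0 ≤ ⟪γ, θ⟫_ℝ := by
  rw [R.inner_eq_sum_coeff hγ.1]
  exact Finset.sum_nonneg fun α hα =>
    mul_nonneg (by exact_mod_cast hγ.2 α hα) (R.inner_simple_nonneg_of_isHighest hθ hα)

lemma add_ne_simple {x y β : V} (hx : x ∈ R.posRoots) (hy : y ∈ R.posRoots)
    (hβ : β ∈ R.simples) : x + y ≠ β := by
  intro hxy
  have hxβ : x ≠ β := fun h => R.nonzero y hy.1 (by rw [h] at hxy; simpa using hxy)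
  obtain ⟨δ, hδ, hδβ, hpos⟩ := R.exists_ne_coeff_pos hx hβ hxβ
  have h : R.simpleBasis.repr (x + y) ⟨δ, hδ⟩ = 0 := by
    rw [hxy, R.simpleBasis_repr_simple hβ, Finsupp.single_eq_of_ne (Subtype.coe_ne_coe.mp hδβ)]
  rw [map_add, Finsupp.add_apply, ← R.coeff_eq_repr hx.1 hδ, ← R.coeff_eq_repr hy.1 hδ] at h
  have : R.coeff x δ + R.coeff y δ = 0 := by exact_mod_cast h
  linarith [hy.2 δ hδ]

end RootSystemData

theorem stmt0_general {V : Type} [NormedAddCommGroup V] [InnerProductSpace ℝ V] [FiniteDimensional ℝ V]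
    (R : RootSystemData V) (θ μ : V) (hθ : R.IsHighest θ)
    (l : List V) (hl : ∀ α ∈ l, α ∈ R.simples) (hw : wordMap l θ = μ)
    (hmin : ∀ l' : List V, (∀ α ∈ l', α ∈ R.simples) → wordMap l' θ = μ →
      l.length ≤ l'.length)
    (β : V) (hβ : β ∈ R.simples) (hβμ : ⟪β, μ⟫_ℝ = 0) :
    wordMap l.reverse β ∈ R.simples ∧ ⟪wordMap l.reverse β, θ⟫_ℝ = 0 := by
  set γ := wordMap l.reverse β
  have hwγ : wordMap l γ = β := wordMap_apply_reverse l β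
  have hγθ : ⟪γ, θ⟫_ℝ = 0 := by rw [← wordMap_inner l, hwγ, hw, hβμ]
  have hpos : ∀ δ ∈ R.posRoots, ⟪δ, θ⟫_ℝ = 0 → wordMap l δ ∈ R.posRoots :=
    fun _ => R.wordMap_mem_posRoots_of_minimal hl (by rwa [hw])
  have hrl : ∀ α ∈ l.reverse, α ∈ R.simples := fun α hα => hl α (List.mem_reverse.mp hα)
  have hγ : γ ∈ R.posRoots := by
    refine (R.mem_posRoots_or_neg_mem (R.wordMap_mem_roots hrl (R.simples_sub hβ))).resolve_right
      fun hneg => ?_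
    have := hpos _ hneg (by rw [inner_neg_left, hγθ, neg_zero])
    rw [wordMap_neg, hwγ] at this
    exact R.neg_notMem_posRoots (R.simple_mem_posRoots hβ) this
  refine ⟨by_contra fun hns => ?_, hγθ⟩
  obtain ⟨α, hα, hγα⟩ := R.exists_sub_simple_mem_posRoots hγ hns
  have hsplit : ⟪γ - α, θ⟫_ℝ = 0 ∧ ⟪α, θ⟫_ℝ = 0 := by
    rw [← add_eq_zero_iff_of_nonneg (R.inner_nonneg_of_isHighest hθ hγα)
      (R.inner_simple_nonneg_of_isHighest hθ hα), ← inner_add_left, sub_add_cancel, hγθ]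
  exact R.add_ne_simple (hpos _ hγα hsplit.1) (hpos _ (R.simple_mem_posRoots hα) hsplit.2) hβ
    (by rw [← wordMap_add, sub_add_cancel, hwγ])

/-- Lemma 2.1: if `μ` is a long positive root, `w ∈ W` takes `θ` to `μ`
and has minimal length among such elements, `β ∈ Π` and `(β, μ) = 0`, then
`w⁻¹(β) ∈ Π` and `(w⁻¹(β), θ) = 0`. -/
theorem stmt0 {V : Type} [NormedAddCommGroup V] [InnerProductSpace ℝ V] [FiniteDimensional ℝ V]
    (R : RootSystemData V) (θ μ : V) (hθ : R.IsHighest θ)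
    (hμpos : μ ∈ R.posRoots) (hμlong : R.IsLong μ)
    (l : List V) (hl : ∀ α ∈ l, α ∈ R.simples) (hw : wordMap l θ = μ)
    (hmin : ∀ l' : List V, (∀ α ∈ l', α ∈ R.simples) → wordMap l' θ = μ →
      l.length ≤ l'.length)
    (β : V) (hβ : β ∈ R.simples) (hβμ : ⟪β, μ⟫_ℝ = 0) :
    wordMap l.reverse β ∈ R.simples ∧ ⟪wordMap l.reverse β, θ⟫_ℝ = 0 :=
  stmt0_general R θ μ hθ l hl hw hmin β hβ hβμ
end

section
/- Let μ ∈ Δ⁺ be a positive root and let α, α̃ be two distinct simple roots. If μ + α ∈ Δ and μ + α̃ ∈ Δ, then μ + α + α̃ ∈ Δ. -/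
open scoped InnerProductSpace

section StmtFiveHelpers

open scoped InnerProductSpace

variable {V : Type} [NormedAddCommGroup V] [InnerProductSpace ℝ V] [FiniteDimensional ℝ V]

private lemma sum_ind [DecidableEq V] (s : Finset V) {a : V} (ha : a ∈ s) (m : ℤ) :
    ∑ β ∈ s, (if β = a then m else 0) • β = m • a := by
  rw [Finset.sum_eq_single a (fun b _ hb => by simp [hb]) (fun h => absurd ha h)]
  simp

namespace RootSystemData

variable (R : RootSystemData V)

lemma inner_self_pos' {γ : V} (h : γ ∈ R.roots) : 0 < ⟪γ, γ⟫_ℝ := by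
  have hne := R.nonzero γ h
  have h0 : ⟪γ, γ⟫_ℝ ≠ 0 := fun hz => hne (inner_self_eq_zero.1 hz)
  exact lt_of_le_of_ne real_inner_self_nonneg (Ne.symm h0)

lemma neg_mem {γ : V} (h : γ ∈ R.roots) : -γ ∈ R.roots := by
  have h2 := R.reflClosed γ h γ h
  have hγγ : ⟪γ, γ⟫_ℝ ≠ 0 := ne_of_gt (R.inner_self_pos' h)
  rw [show 2 * ⟪γ, γ⟫_ℝ / ⟪γ, γ⟫_ℝ = 2 by field_simp] at h2
  have e : γ - (2 : ℝ) • γ = -γ := by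
    rw [two_smul]; abel
  rwa [e] at h2

lemma sub_mem_of_inner_pos {β γ : V} (hβ : β ∈ R.roots) (hγ : γ ∈ R.roots)
    (hpos : 0 < ⟪β, γ⟫_ℝ) (hne : β ≠ γ) : β - γ ∈ R.roots := by
  obtain ⟨k1, hk1⟩ := R.crystal γ hγ β hβ
  obtain ⟨k2, hk2⟩ := R.crystal β hβ γ hγ
  have hγγ := R.inner_self_pos' hγ
  have hββ := R.inner_self_pos' hβ
  have hk1pos : (0 : ℝ) < (k1 : ℝ) := by
    rw [← hk1]; exact div_pos (by linarith) hγγ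
  have hk2pos : (0 : ℝ) < (k2 : ℝ) := by
    rw [← hk2]
    exact div_pos (by rw [real_inner_comm]; linarith) hββ
  have hk1i : (1 : ℤ) ≤ k1 := by exact_mod_cast hk1pos
  have hk2i : (1 : ℤ) ≤ k2 := by exact_mod_cast hk2pos
  rcases eq_or_lt_of_le hk1i with h1 | h1
  · have h2 := R.reflClosed γ hγ β hβ
    rw [hk1, ← h1] at h2
    simpa using h2
  rcases eq_or_lt_of_le hk2i with h2 | h2
  · have h3 := R.reflClosed β hβ γ hγ
    rw [hk2, ← h2] at h3
    simp only [Int.cast_one, one_smul] at h3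
    have := R.neg_mem h3
    rwa [neg_sub] at this
  -- now both k1, k2 ≥ 2
  have h4 : (4 : ℝ) ≤ (k1 : ℝ) * (k2 : ℝ) := by
    have : (4 : ℤ) ≤ k1 * k2 := by nlinarith
    exact_mod_cast this
  have hprod : (k1 : ℝ) * (k2 : ℝ) = 4 * (⟪β, γ⟫_ℝ * ⟪β, γ⟫_ℝ) / (⟪γ, γ⟫_ℝ * ⟪β, β⟫_ℝ) := by
    rw [← hk1, ← hk2, real_inner_comm γ β]
    field_simp
    ring
  have key : ⟪β, β⟫_ℝ * ⟪γ, γ⟫_ℝ ≤ ⟪β, γ⟫_ℝ * ⟪β, γ⟫_ℝ := by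
    rw [hprod] at h4
    have hden : 0 < ⟪γ, γ⟫_ℝ * ⟪β, β⟫_ℝ := mul_pos hγγ hββ
    rw [le_div_iff₀ hden] at h4
    nlinarith
  have hcs := real_inner_mul_inner_self_le β γ
  have heqsq : ⟪β, γ⟫_ℝ * ⟪β, γ⟫_ℝ = ⟪β, β⟫_ℝ * ⟪γ, γ⟫_ℝ := le_antisymm hcs key
  have heq : ⟪β, γ⟫_ℝ = ‖β‖ * ‖γ‖ := by
    rw [real_inner_self_eq_norm_mul_norm, real_inner_self_eq_norm_mul_norm] at heqsq
    nlinarith [norm_nonneg β, norm_nonneg γ, mul_nonneg (norm_nonneg β) (norm_nonneg γ), hpos]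
  have hpar : ‖γ‖ • β = ‖β‖ • γ := inner_eq_norm_mul_iff_real.1 heq
  have hβ0 : ‖β‖ ≠ 0 := norm_ne_zero_iff.2 (R.nonzero β hβ)
  have hγeq : (‖γ‖ / ‖β‖) • β = γ := by
    rw [div_eq_mul_inv, mul_comm, mul_smul, hpar, smul_smul, inv_mul_cancel₀ hβ0, one_smul]
  have ht := R.reduced β hβ (‖γ‖ / ‖β‖) (by rw [hγeq]; exact hγ)
  rcases ht with ht | ht
  · exfalso
    apply hne
    rw [← hγeq, ht, one_smul]
  · exfalso
    have : (0 : ℝ) ≤ ‖γ‖ / ‖β‖ := div_nonneg (norm_nonneg γ) (norm_nonneg β)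
    rw [ht] at this
    linarith

lemma add_mem_of_inner_neg {β γ : V} (hβ : β ∈ R.roots) (hγ : γ ∈ R.roots)
    (hneg : ⟪β, γ⟫_ℝ < 0) (hne : β ≠ -γ) : β + γ ∈ R.roots := by
  have h := R.sub_mem_of_inner_pos hβ (R.neg_mem hγ)
    (by rw [inner_neg_right]; linarith) hne
  rwa [sub_neg_eq_add] at h

lemma coeff_unique {γ : V} (hγ : γ ∈ R.roots) (d : V → ℤ)
    (hd : γ = ∑ β ∈ R.simples, d β • β) {α : V} (hα : α ∈ R.simples) :
    R.coeff γ α = d α := by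
  classical
  have hspec := R.coeff_spec γ hγ
  have hsum : ∑ β ∈ R.simples, ((R.coeff γ β - d β : ℤ) : ℝ) • β = 0 := by
    simp only [Int.cast_sub, sub_smul, Int.cast_smul_eq_zsmul ℝ, Finset.sum_sub_distrib]
    rw [← hspec, ← hd, sub_self]
  have hsum' : ∑ i : {x : V // x ∈ R.simples},
      (fun x : {x : V // x ∈ R.simples} => ((R.coeff γ x.1 - d x.1 : ℤ) : ℝ)) i •
        (Subtype.val i) = 0 := by
    rw [Finset.sum_coe_sort R.simples (fun β => ((R.coeff γ β - d β : ℤ) : ℝ) • β)]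
    exact hsum
  have hz := Fintype.linearIndependent_iff.1 R.simples_indep _ hsum' ⟨α, hα⟩
  have h0 : (R.coeff γ α - d α : ℤ) = 0 := by exact_mod_cast hz
  omega

lemma simples_sub_not_mem {α α' : V} (hα : α ∈ R.simples) (hα' : α' ∈ R.simples)
    (hne : α ≠ α') : α - α' ∉ R.roots := by
  classical
  intro hmem
  set d : V → ℤ := fun β => (if β = α then 1 else 0) + (if β = α' then -1 else 0) with hd
  have hrep : α - α' = ∑ β ∈ R.simples, d β • β := by
    simp only [hd, add_smul, Finset.sum_add_distrib, sum_ind R.simples hα (1 : ℤ),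
      sum_ind R.simples hα' (-1 : ℤ)]
    simp only [one_zsmul, neg_smul]
    abel
  have h1 : R.coeff (α - α') α = 1 := by
    rw [R.coeff_unique hmem d hrep hα]
    simp [hd, hne]
  have h2 : R.coeff (α - α') α' = -1 := by
    rw [R.coeff_unique hmem d hrep hα']
    simp [hd, Ne.symm hne]
  rcases R.coeff_sign _ hmem with h | h
  · have := h α' hα'; omega
  · have := h α hα; omega

lemma posRoot_ne_neg_add {μ α α' : V} (hμ : μ ∈ R.posRoots) (hα : α ∈ R.simples)
    (hα' : α' ∈ R.simples) (hne : α ≠ α') : μ ≠ -α - α' := by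
  classical
  intro h
  set d : V → ℤ := fun β => (if β = α then -1 else 0) + (if β = α' then -1 else 0) with hd
  have hrep : μ = ∑ β ∈ R.simples, d β • β := by
    simp only [hd, add_smul, Finset.sum_add_distrib, sum_ind R.simples hα (-1 : ℤ),
      sum_ind R.simples hα' (-1 : ℤ)]
    rw [h]
    simp only [neg_smul, one_zsmul]
    abel
  have h1 : R.coeff μ α = -1 := by
    rw [R.coeff_unique hμ.1 d hrep hα]
    simp [hd, hne]
  have h0 := hμ.2 α hα
  omega

lemma simples_inner_nonpos {α α' : V} (hα : α ∈ R.simples) (hα' : α' ∈ R.simples)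
    (hne : α ≠ α') : ⟪α, α'⟫_ℝ ≤ 0 := by
  by_contra h
  push_neg at h
  exact R.simples_sub_not_mem hα hα' hne
    (R.sub_mem_of_inner_pos (R.simples_sub hα) (R.simples_sub hα') h hne)

end RootSystemData

end StmtFiveHelpers

/-- Lemma 3.2: if `μ ∈ Δ⁺`, `α, α̃` are distinct simple roots, and both
`μ + α` and `μ + α̃` are roots, then `μ + α + α̃` is a root. -/


theorem stmt5 {V : Type} [NormedAddCommGroup V] [InnerProductSpace ℝ V] [FiniteDimensional ℝ V]
    (R : RootSystemData V) (μ α α' : V)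
    (hμ : μ ∈ R.posRoots) (hα : α ∈ R.simples) (hα' : α' ∈ R.simples) (hne : α ≠ α')
    (h1 : μ + α ∈ R.roots) (h2 : μ + α' ∈ R.roots) :
    μ + α + α' ∈ R.roots := by
  by_cases hc1 : ⟪μ + α, α'⟫_ℝ < 0
  · refine R.add_mem_of_inner_neg h1 (R.simples_sub hα') hc1 ?_
    intro h
    have : μ = -α' - α := by rw [← h]; abel
    exact R.posRoot_ne_neg_add hμ hα' hα (Ne.symm hne) this
  · by_cases hc2 : ⟪μ + α', α⟫_ℝ < 0
    · have hmem := R.add_mem_of_inner_neg h2 (R.simples_sub hα) hc2 ?_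
      · have e : μ + α + α' = μ + α' + α := by abel
        rwa [e]
      · intro h
        have : μ = -α - α' := by rw [← h]; abel
        exact R.posRoot_ne_neg_add hμ hα hα' hne this
    · exfalso
      push_neg at hc1 hc2
      have hαα' := R.simples_inner_nonpos hα hα' hne
      have hμμ : 0 < ⟪μ, μ⟫_ℝ := R.inner_self_pos' hμ.1
      have e2 : ⟪μ + α, α'⟫_ℝ = ⟪μ, α'⟫_ℝ + ⟪α, α'⟫_ℝ := by rw [inner_add_left]
      have e3 : ⟪μ + α', α⟫_ℝ = ⟪μ, α⟫_ℝ + ⟪α, α'⟫_ℝ := by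
        rw [inner_add_left, real_inner_comm α' α]
      rw [e2] at hc1
      rw [e3] at hc2
      have hinner : 0 < ⟪μ + α, μ + α'⟫_ℝ := by
        have e1 : ⟪μ + α, μ + α'⟫_ℝ =
            ⟪μ, μ⟫_ℝ + ⟪μ, α⟫_ℝ + (⟪μ, α'⟫_ℝ + ⟪α, α'⟫_ℝ) := by
          rw [inner_add_left, inner_add_right, inner_add_right, real_inner_comm α μ]
          ring
        rw [e1]
        linarith
      have hnee : μ + α ≠ μ + α' := fun h => hne (by exact add_left_cancel h)
      have hsub := R.sub_mem_of_inner_pos h1 h2 hinner hnee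
      have e : μ + α - (μ + α') = α - α' := by abel
      rw [e] at hsub
      exact R.simples_sub_not_mem hα hα' hne hsub
end
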